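/- The distribution of the generating operator is the semicircle law of variance N: with T = Σ_{j=1}^{N} (L_j + L_j*), for every natural number n one has ⟨T^n δ_e, δ_e⟩ = (1/(2πN)) ∫_{-2√N}^{2√N} t^n √(4N − t²) dt. -/

import Mathlib

/-!
Let `P_m = ∑_{|w| = m} δ_w`. Then `∑_j L_j P_m = P_{m+1}`, while each `L_j*` maps `P_{m+1}`
to `P_m` and kills `δ_e`, so `T P_m = P_{m+1} + N P_{m-1}`. After rescaling
`P_m` by `√N ^ m`, `T` acts as `√N` times the adjacency operator of `ℕ`, hence
`⟨Tⁿ δ_e, δ_e⟩ = √N ^ n · #{Dyck paths of length n}`. By the reflection principle this count is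
`C(2k, k) - C(2k, k + 1) = Cat_k` for `n = 2k` and `0` for odd `n`. On the other side, the
substitution `t = 2√N sin θ` turns the semicircle integral into Wallis integrals
`∫ sin^(2k) = π C(2k, k) / 4^k`, which give the same moments `N^k Cat_k`.
-/

noncomputable section

/-- The Hilbert space `ℓ²(FreeMonoid (Fin N), ℂ)`. -/
abbrev FMH (N : ℕ) : Type := lp (fun _ : FreeMonoid (Fin N) => ℂ) 2

/-- The standard orthonormal basis vector `δ_w` at the word `w`. -/
noncomputable def delta (N : ℕ) (w : FreeMonoid (Fin N)) : FMH N :=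
  letI : DecidableEq (FreeMonoid (Fin N)) := Classical.decEq _
  lp.single 2 w 1

open Real intervalIntegral
open scoped InnerProductSpace

/-- `ballot n m` counts the `±1` lattice paths of length `n` from height `0` to height `m`
that never go below `0`. -/
def ballot : ℕ → ℕ → ℕ
  | 0, m => if m = 0 then 1 else 0
  | n + 1, 0 => ballot n 1
  | n + 1, m + 1 => ballot n m + ballot n (m + 2)

theorem ballot_eq_zero_of_lt {n m : ℕ} (h : n < m) : ballot n m = 0 := by
  induction n generalizing m with
  | zero => simp [ballot, h.ne']
  | succ n ih =>
    obtain ⟨m, rfl⟩ := Nat.exists_eq_add_one_of_ne_zero (by omega : m ≠ 0)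
    rw [ballot, ih (by omega), ih (by omega)]

theorem ballot_eq_zero_of_odd {n m : ℕ} (h : Odd (n + m)) : ballot n m = 0 := by
  induction n generalizing m with
  | zero =>
    rw [ballot, if_neg]
    rintro rfl
    exact Nat.not_odd_zero h
  | succ n ih =>
    cases m with
    | zero => exact ih (by simpa [add_comm] using h)
    | succ m => rw [ballot, ih (by grind), ih (by grind)]

/-- The reflection principle `ballot (m + 2k) m = C(m + 2k, k) - C(m + 2k, k - 1)`, written
without truncated subtraction via `C(m + 2k, k - 1) = C(m + 2k, m + k + 1)`. -/
theorem ballot_add_choose (m k : ℕ) :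
    ballot (m + 2 * k) m + (m + 2 * k).choose (m + k + 1) = (m + 2 * k).choose k := by
  induction h : m + 2 * k generalizing m k with
  | zero =>
    obtain ⟨rfl, rfl⟩ : m = 0 ∧ k = 0 := by omega
    simp [ballot]
  | succ n ih =>
    rcases m with _ | m
    · obtain ⟨k, rfl⟩ := Nat.exists_eq_add_one_of_ne_zero (by omega : k ≠ 0)
      have h1 := ih 1 k (by omega)
      rw [ballot, Nat.choose_succ_succ', Nat.choose_succ_succ']
      grind
    · rw [ballot]
      have h1 := ih m k (by omega)
      rcases k with _ | k
      · rw [ballot_eq_zero_of_lt (m := m + 2) (by omega), Nat.choose_eq_zero_of_lt (by omega)]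
        rw [Nat.choose_eq_zero_of_lt (by omega)] at h1
        simpa using h1
      · have h2 := ih (m + 2) k (by omega)
        rw [Nat.choose_succ_succ', Nat.choose_succ_succ']
        grind

theorem ballot_two_mul_zero (k : ℕ) : ballot (2 * k) 0 = catalan k := by
  have h := ballot_add_choose 0 k
  have hsucc := Nat.choose_succ_right_eq (2 * k) k
  have hcat := succ_mul_catalan_eq_centralBinom k
  rw [Nat.centralBinom_eq_two_mul_choose] at hcat
  simp only [zero_add] at h
  rw [show 2 * k - k = k by omega] at hsucc
  -- `(k + 1) C(2k, k + 1) = k C(2k, k)`, so `(k + 1) · ballot (2k) 0 = C(2k, k) = (k + 1) Cat_k`.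
  apply Nat.eq_of_mul_eq_mul_left k.succ_pos
  nlinarith

section PathExpansion

variable {R E : Type*} [CommSemiring R] [AddCommMonoid E] [Module R E]

theorem sum_range_ballot_succ_nsmul (v : ℕ → E) (n : ℕ) :
    ∑ m ∈ Finset.range (n + 2), ballot (n + 1) m • v m =
      ∑ m ∈ Finset.range (n + 1), ballot n m • v (m + 1) +
        ∑ m ∈ Finset.range n, ballot n (m + 1) • v m := by
  have hdown : ∑ m ∈ Finset.range (n + 2), ballot n (m + 1) • v m =
      ∑ m ∈ Finset.range n, ballot n (m + 1) • v m := by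
    rw [Finset.sum_range_succ, Finset.sum_range_succ, ballot_eq_zero_of_lt (by omega),
      ballot_eq_zero_of_lt (by omega), zero_smul, zero_smul, add_zero, add_zero]
  rw [← hdown, Finset.sum_range_succ', Finset.sum_range_succ' _ (n + 1)]
  simp only [ballot, add_smul, Finset.sum_add_distrib]
  abel

theorem pow_apply_eq_sum_ballot (T : Module.End R E) (s : R) (v : ℕ → E)
    (h₀ : T (v 0) = s • v 1) (hsucc : ∀ m, T (v (m + 1)) = s • (v (m + 2) + v m)) (n : ℕ) :
    (T ^ n) (v 0) = s ^ n • ∑ m ∈ Finset.range (n + 1), ballot n m • v m := by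
  induction n with
  | zero => simp [ballot]
  | succ n ih =>
    have hstep : T (∑ m ∈ Finset.range (n + 1), ballot n m • v m) =
        s • ∑ m ∈ Finset.range (n + 2), ballot (n + 1) m • v m := by
      rw [sum_range_ballot_succ_nsmul, map_sum, Finset.sum_range_succ', Finset.sum_range_succ' _ n]
      simp only [map_nsmul, hsucc, h₀, smul_add, Finset.sum_add_distrib, smul_comm _ s,
        ← Finset.smul_sum]
      abel
    rw [pow_succ', Module.End.mul_apply, ih, map_smul, hstep, smul_smul, pow_succ]

end PathExpansion

namespace FreeMonoid

theorem sum_ofList_ofFn_succ {α M : Type*} [Fintype α] [AddCommMonoid M]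
    (f : FreeMonoid α → M) (m : ℕ) :
    ∑ v : Fin (m + 1) → α, f (ofList (List.ofFn v)) =
      ∑ i : α, ∑ v : Fin m → α, f (of i * ofList (List.ofFn v)) := by
  rw [← Fintype.sum_prod_type']
  exact (Fintype.sum_equiv (Fin.consEquiv fun _ => α) _ _ fun p => by simp [List.ofFn_succ]).symm

theorem of_mul_eq_of_mul_iff {α : Type*} {i j : α} {u w : FreeMonoid α} :
    of i * u = of j * w ↔ i = j ∧ u = w := by
  rw [← toList.injective.eq_iff, ← toList.injective.eq_iff (a := u)]
  simp

end FreeMonoid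

section FreeMonoidSpace

open scoped Classical

variable {N : ℕ}

theorem delta_apply (w u : FreeMonoid (Fin N)) : delta N w u = if u = w then 1 else 0 := by
  simp [delta, lp.single_apply, Pi.single_apply]

theorem inner_delta_left (w : FreeMonoid (Fin N)) (f : FMH N) : ⟪delta N w, f⟫_ℂ = f w := by
  simp [delta, lp.inner_single_left]

def sphereSum (N m : ℕ) : FMH N :=
  ∑ v : Fin m → Fin N, delta N (FreeMonoid.ofList (List.ofFn v))

theorem sphereSum_zero : sphereSum N 0 = delta N 1 := by
  simp [sphereSum]

theorem inner_sphereSum_delta_one (m : ℕ) :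
    ⟪sphereSum N m, delta N 1⟫_ℂ = if m = 0 then 1 else 0 := by
  rcases m with _ | m
  · rw [sphereSum_zero, inner_delta_left, delta_apply, if_pos rfl, if_pos rfl]
  · rw [sphereSum, FreeMonoid.sum_ofList_ofFn_succ]
    simp [inner_delta_left, delta_apply]

variable (L : FreeMonoid (Fin N) → (FMH N →L[ℂ] FMH N))

def generatingOperator : FMH N →L[ℂ] FMH N :=
  ∑ j : Fin N, (L (.of j) + (L (.of j)).adjoint)

variable (hL : ∀ w h : FreeMonoid (Fin N), L w (delta N h) = delta N (w * h))
include hL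

theorem adjoint_creation_apply (j : Fin N) (f : FMH N) (w : FreeMonoid (Fin N)) :
    (L (.of j)).adjoint f w = f (.of j * w) := by
  rw [← inner_delta_left, ContinuousLinearMap.adjoint_inner_right, hL, inner_delta_left]

theorem adjoint_creation_delta_one (j : Fin N) : (L (.of j)).adjoint (delta N 1) = 0 := by
  ext w
  simp [adjoint_creation_apply L hL, delta_apply]

theorem adjoint_creation_delta_of_mul (i j : Fin N) (w : FreeMonoid (Fin N)) :
    (L (.of j)).adjoint (delta N (.of i * w)) = if i = j then delta N w else 0 := by
  ext u
  rw [adjoint_creation_apply L hL, delta_apply, FreeMonoid.of_mul_eq_of_mul_iff]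
  by_cases hij : i = j
  · subst hij; simp [delta_apply]
  · simp [hij, Ne.symm hij]

theorem sum_creation_sphereSum (m : ℕ) :
    ∑ j : Fin N, L (.of j) (sphereSum N m) = sphereSum N (m + 1) := by
  simp only [sphereSum, map_sum, hL]
  rw [FreeMonoid.sum_ofList_ofFn_succ]

theorem adjoint_creation_sphereSum_succ (j : Fin N) (m : ℕ) :
    (L (.of j)).adjoint (sphereSum N (m + 1)) = sphereSum N m := by
  rw [sphereSum, FreeMonoid.sum_ofList_ofFn_succ, map_sum]
  simp [adjoint_creation_delta_of_mul L hL, sphereSum]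

theorem generatingOperator_sphereSum_zero :
    generatingOperator L (sphereSum N 0) = sphereSum N 1 := by
  rw [← sum_creation_sphereSum L hL, generatingOperator, sphereSum_zero]
  simp [adjoint_creation_delta_one L hL]

theorem generatingOperator_sphereSum_succ (m : ℕ) :
    generatingOperator L (sphereSum N (m + 1)) =
      sphereSum N (m + 2) + (N : ℂ) • sphereSum N m := by
  simp only [generatingOperator, sum_apply, add_apply, Finset.sum_add_distrib,
    sum_creation_sphereSum L hL, adjoint_creation_sphereSum_succ L hL, Finset.sum_const,
    Finset.card_univ, Fintype.card_fin, Nat.cast_smul_eq_nsmul]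

theorem inner_generatingOperator_pow_delta_one (hN : 0 < N) (n : ℕ) :
    ⟪(generatingOperator L ^ n) (delta N 1), delta N 1⟫_ℂ = ((√N ^ n * ballot n 0 : ℝ) : ℂ) := by
  set s : ℂ := ((√N : ℝ) : ℂ)
  have hs : s ≠ 0 := by simp [s, hN.ne']
  have hs2 : s ^ 2 = N := by simp [s, ← Complex.ofReal_pow]
  let v (m : ℕ) : FMH N := (s ^ m)⁻¹ • sphereSum N m
  have h₀ : generatingOperator L (v 0) = s • v 1 := by
    simp [v, generatingOperator_sphereSum_zero L hL, smul_smul, hs]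
  have hsucc (m : ℕ) : generatingOperator L (v (m + 1)) = s • (v (m + 2) + v m) := by
    simp only [v, map_smul, generatingOperator_sphereSum_succ L hL, smul_add, smul_smul]
    congr 2
    · field_simp
      ring
    · rw [← hs2]; field_simp; ring
  have key := pow_apply_eq_sum_ballot (generatingOperator L : FMH N →ₗ[ℂ] FMH N) s v h₀ hsucc n
  rw [← ContinuousLinearMap.toLinearMap_pow, ContinuousLinearMap.coe_coe] at key
  simp only [v, pow_zero, inv_one, one_smul, sphereSum_zero] at key
  rw [key, inner_smul_left, sum_inner]
  simp only [← Nat.cast_smul_eq_nsmul ℂ, inner_smul_left, inner_sphereSum_delta_one, mul_ite,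
    mul_one, mul_zero, Finset.sum_ite_eq', Finset.mem_range, Nat.zero_lt_succ, if_true]
  simp [s]

end FreeMonoidSpace

theorem integral_eq_zero_of_odd {f : ℝ → ℝ} (hf : ∀ x, f (-x) = -f x) (a : ℝ) :
    ∫ x in -a..a, f x = 0 := by
  have h := integral_comp_neg (a := -a) (b := a) f
  simp only [hf, intervalIntegral.integral_neg, neg_neg] at h
  linarith

theorem integral_sin_pow_add_two_neg_pi_div_two (n : ℕ) :
    ∫ x in -(π / 2)..π / 2, sin x ^ (n + 2) =
      (n + 1) / (n + 2) * ∫ x in -(π / 2)..π / 2, sin x ^ n := by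
  simp [integral_sin_pow]

theorem integral_sin_pow_two_mul_neg_pi_div_two (k : ℕ) :
    ∫ x in -(π / 2)..π / 2, sin x ^ (2 * k) = π * k.centralBinom / 4 ^ k := by
  induction k with
  | zero => simp
  | succ k ih =>
    have hcb : ((k + 1).centralBinom : ℝ) = 2 * (2 * k + 1) * k.centralBinom / (k + 1) := by
      rw [eq_div_iff (by positivity), mul_comm]
      exact_mod_cast Nat.succ_mul_centralBinom_succ k
    rw [mul_add_one, integral_sin_pow_add_two_neg_pi_div_two, ih, hcb]
    push_cast
    field_simp
    ring

theorem integral_pow_mul_sqrt_sq_sub_sq (k : ℕ) {r : ℝ} (hr : 0 ≤ r) :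
    ∫ t in -r..r, t ^ (2 * k) * √(r ^ 2 - t ^ 2) = 2 * π * (r ^ 2 / 4) ^ (k + 1) * catalan k := by
  have hsubst := integral_comp_mul_deriv (a := -(π / 2)) (b := π / 2) (f := fun x => r * sin x)
    (f' := fun x => r * cos x) (g := fun t => t ^ (2 * k) * √(r ^ 2 - t ^ 2))
    (fun x _ => (hasDerivAt_sin x).const_mul r) (by fun_prop) (by fun_prop)
  simp only [Function.comp_def, sin_neg, sin_pi_div_two, mul_neg, mul_one] at hsubst
  rw [← hsubst]
  have hintegrand : ∀ x ∈ Set.uIcc (-(π / 2)) (π / 2),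
      (r * sin x) ^ (2 * k) * √(r ^ 2 - (r * sin x) ^ 2) * (r * cos x) =
        r ^ (2 * k + 2) * (sin x ^ (2 * k) - sin x ^ (2 * k + 2)) := by
    intro x hx
    rw [Set.uIcc_of_le (by linarith [pi_pos])] at hx
    have hsqrt : √(r ^ 2 - (r * sin x) ^ 2) = r * cos x := by
      rw [← sqrt_sq (mul_nonneg hr (cos_nonneg_of_mem_Icc hx))]
      congr 1
      linear_combination (-r ^ 2) * sin_sq_add_cos_sq x
    rw [hsqrt]
    linear_combination r ^ (2 * k + 2) * sin x ^ (2 * k) * sin_sq_add_cos_sq x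
  have hint (n : ℕ) : IntervalIntegrable (fun x => sin x ^ n) MeasureTheory.volume
      (-(π / 2)) (π / 2) := (continuous_sin.pow n).intervalIntegrable _ _
  have hcat : (k.centralBinom : ℝ) = (k + 1) * catalan k := by
    exact_mod_cast (succ_mul_catalan_eq_centralBinom k).symm
  rw [integral_congr hintegrand, intervalIntegral.integral_const_mul,
    intervalIntegral.integral_sub (hint _) (hint _), integral_sin_pow_add_two_neg_pi_div_two,
    integral_sin_pow_two_mul_neg_pi_div_two, hcat, div_pow, ← pow_mul,
    show 2 * k + 2 = 2 * (k + 1) by ring]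
  push_cast
  field_simp
  ring

theorem semicircle_moment_eq {N : ℕ} (hN : 0 < N) (n : ℕ) :
    1 / (2 * π * N) * ∫ t in -(2 * √N)..2 * √N, t ^ n * √(4 * N - t ^ 2) =
      √N ^ n * ballot n 0 := by
  have hr : (2 * √N) ^ 2 = 4 * N := by rw [mul_pow, sq_sqrt (Nat.cast_nonneg N)]; ring
  obtain ⟨k, rfl | rfl⟩ := Nat.even_or_odd' n
  · rw [← hr, integral_pow_mul_sqrt_sq_sub_sq k (by positivity), hr, ballot_two_mul_zero,
      pow_mul, sq_sqrt (Nat.cast_nonneg N)]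
    have : (N : ℝ) ≠ 0 := by exact_mod_cast hN.ne'
    field_simp
    ring
  · rw [ballot_eq_zero_of_odd (by simp), integral_eq_zero_of_odd]
    · simp
    · intro t
      rw [Odd.neg_pow (by simp), neg_sq, neg_mul]

/-- The distribution of the generating operator `T = Σ_j (L_j + L_j*)` is the semicircle
law of variance `N`:
`⟨T^n δ_e, δ_e⟩ = (1/(2πN)) ∫_{-2√N}^{2√N} tⁿ √(4N − t²) dt` for all `n`. -/
theorem generating_operator_semicircle_law (N : ℕ) (hN : 0 < N)
    (L : FreeMonoid (Fin N) → (FMH N →L[ℂ] FMH N))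
    (hL : ∀ w h : FreeMonoid (Fin N), L w (delta N h) = delta N (w * h))
    (n : ℕ) :
    (inner ℂ
        (((∑ j : Fin N, (L (FreeMonoid.of j) + ContinuousLinearMap.adjoint (L (FreeMonoid.of j))))
            ^ n) (delta N 1))
        (delta N 1) : ℂ) =
      ((1 / (2 * Real.pi * N)) *
        ∫ t in (-(2 * Real.sqrt N))..(2 * Real.sqrt N),
          t ^ n * Real.sqrt (4 * N - t ^ 2) : ℝ) := by
  rw [semicircle_moment_eq hN n]
  exact inner_generatingOperator_pow_delta_one L hL hN n
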